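/- arXiv:1709.10216 — 4 statements merged into one kernel-verified Lean document; each statement's English description precedes it below -/
import Mathlib

section
/- For 1 < p ≤ 2, the generating function ψ_p(y) = (y^p − p(y−1) − 1)/(p(p−1)) satisfies the admissibility condition (ψ_p''')² ≤ (1/2) ψ_p'' ψ_p'''' on ℝ⁺. -/
/-!
Differentiating twice kills the affine part: `ψ_p'' = y ^ (p - 2)` on all of `ℝ`. So the
condition is `(f')² ≤ f f'' / 2` for the pure power `f = y ^ r`, `r = p - 2`; at `y > 0` it reads
`r² ≤ r (r - 1) / 2`, i.e. `r (r + 1) ≤ 0`, which holds since `r ∈ (-1, 0]`.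
-/

open Real

theorem iterate_deriv_two_eq_rpow {p : ℝ} (hp : 1 < p) {ψ : ℝ → ℝ}
    (hψ : ∀ y : ℝ, ψ y = (y ^ p - p * (y - 1) - 1) / (p * (p - 1))) :
    deriv^[2] ψ = fun y => y ^ (p - 2) := by
  have hp0 : p ≠ 0 := by positivity
  have hp1 : p - 1 ≠ 0 := sub_ne_zero.2 hp.ne'
  have h1 : deriv ψ = fun y => (p * y ^ (p - 1) - p) / (p * (p - 1)) := by
    ext y
    have hψy : HasDerivAt ψ ((p * y ^ (p - 1) - p * 1) / (p * (p - 1))) y := by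
      rw [show ψ = _ from funext hψ]
      exact (((hasDerivAt_rpow_const (Or.inr hp.le)).sub
        (((hasDerivAt_id y).sub_const 1).const_mul p)).sub_const 1).div_const _
    rw [hψy.deriv, mul_one]
  ext y
  rw [Function.iterate_succ_apply', Function.iterate_one, h1, deriv_div_const, deriv_sub_const,
    deriv_const_mul_field, Real.deriv_rpow_const, sub_sub, one_add_one_eq_two]
  field_simp

theorem sq_deriv_rpow_le_half_mul {r y : ℝ} (hr1 : -1 ≤ r) (hr0 : r ≤ 0) (hy : 0 < y) :
    (r * y ^ (r - 1)) ^ 2 ≤ 1 / 2 * y ^ r * (r * (r - 1) * y ^ (r - 2)) := by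
  have hsq : (y ^ (r - 1)) ^ 2 = y ^ r * y ^ (r - 2) := by
    rw [← rpow_natCast, ← rpow_mul hy.le, ← rpow_add hy]; ring_nf
  calc (r * y ^ (r - 1)) ^ 2 = r ^ 2 * (y ^ r * y ^ (r - 2)) := by rw [mul_pow, hsq]
    _ ≤ r * (r - 1) / 2 * (y ^ r * y ^ (r - 2)) := by gcongr; nlinarith
    _ = 1 / 2 * y ^ r * (r * (r - 1) * y ^ (r - 2)) := by ring

/-- For 1 < p ≤ 2, ψ_p(y) = (y^p − p(y−1) − 1)/(p(p−1)) satisfies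
(ψ_p''')² ≤ (1/2) ψ_p'' ψ_p'''' on ℝ⁺. -/
theorem stmt_1 (p : ℝ) (hp1 : 1 < p) (hp2 : p ≤ 2)
    (ψ : ℝ → ℝ) (hψ : ∀ y : ℝ, ψ y = (y ^ p - p * (y - 1) - 1) / (p * (p - 1))) :
    ∀ y : ℝ, 0 < y →
      (deriv^[3] ψ y) ^ 2 ≤ (1 / 2) * (deriv^[2] ψ y) * (deriv^[4] ψ y) := by
  intro y hy
  have hderiv (k : ℕ) :
      deriv^[k + 2] ψ y = (descPochhammer ℝ k).eval (p - 2) * y ^ (p - 2 - k) := by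
    rw [Function.iterate_add_apply, iterate_deriv_two_eq_rpow hp1 hψ, iter_deriv_rpow_const]
  rw [show 3 = 1 + 2 from rfl, show 4 = 2 + 2 from rfl, ← zero_add 2, hderiv, hderiv, hderiv]
  convert sq_deriv_rpow_le_half_mul (r := p - 2) (by linarith) (by linarith) hy using 3 <;>
    simp [descPochhammer_succ_right]
end

section
/- For 1 < p₁ < p₂ ≤ 2 there exists a constant C > 0 such that for every y ≥ 0, (y^{p₁} − p₁(y−1) − 1)/(p₁(p₁−1)) ≤ C · (y^{p₂} − p₂(y−1) − 1)/(p₂(p₂−1)). -/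
open intervalIntegral MeasureTheory

private lemma self_mul_rpow {p y : ℝ} (hp : 1 < p) (hy : 0 ≤ y) :
    y * y ^ (p - 1) = y ^ p := by
  rcases eq_or_lt_of_le hy with h | h
  · rw [← h, Real.zero_rpow (by linarith), Real.zero_rpow (by linarith), mul_zero]
  · rw [mul_comm, ← Real.rpow_add_one (ne_of_gt h) (p - 1)]
    norm_num

private lemma integrand_integrable {p y : ℝ} (hp : 1 < p) :
    IntervalIntegrable (fun t => (y - t) * t ^ (p - 2)) volume 1 y := by
  have h := intervalIntegral.intervalIntegrable_rpow' (a := 1) (b := y)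
    (r := p - 2) (by linarith)
  exact h.continuousOn_mul (by fun_prop)

private lemma psi_eq_integral {p y : ℝ} (hp : 1 < p) (hy : 0 ≤ y) :
    (y ^ p - p * (y - 1) - 1) / (p * (p - 1)) =
      ∫ t in (1:ℝ)..y, (y - t) * t ^ (p - 2) := by
  have hp0 : (0:ℝ) < p := by linarith
  have hp1 : (0:ℝ) < p - 1 := by linarith
  have h1 : ∫ t in (1:ℝ)..y, t ^ (p - 2) = (y ^ (p-1) - 1) / (p - 1) := by
    rw [integral_rpow (Or.inl (by linarith))]
    rw [show p - 2 + 1 = p - 1 by ring, Real.one_rpow]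
  have h2 : ∫ t in (1:ℝ)..y, t ^ (p - 1) = (y ^ p - 1) / p := by
    rw [integral_rpow (Or.inl (by linarith))]
    rw [show p - 1 + 1 = p by ring, Real.one_rpow]
  have hcongr : ∀ t ∈ Set.uIcc (1:ℝ) y,
      (y - t) * t ^ (p - 2) = y * t ^ (p - 2) - t ^ (p - 1) := by
    intro t ht
    have ht0 : 0 ≤ t := by
      rcases Set.mem_uIcc.mp ht with h | h
      · linarith [h.1]
      · linarith [h.1, hy]
    rcases eq_or_lt_of_le ht0 with h | h
    · rw [← h, Real.zero_rpow (sub_ne_zero.mpr (show p ≠ 1 by linarith))]; ring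
    · have : t ^ (p - 1) = t ^ (p - 2) * t := by
        rw [← Real.rpow_add_one (ne_of_gt h) (p - 2)]; ring_nf
      rw [this]; ring
  rw [intervalIntegral.integral_congr hcongr,
    intervalIntegral.integral_sub
      ((intervalIntegral.intervalIntegrable_rpow' (by linarith : (-1:ℝ) < p - 2)).const_mul y)
      (intervalIntegral.intervalIntegrable_rpow' (by linarith : (-1:ℝ) < p - 1)),
    intervalIntegral.integral_const_mul, h1, h2]
  have key := self_mul_rpow hp hy
  rw [← key]
  field_simp
  ring

private lemma psi_eq_integral' {p y : ℝ} (hp : 1 < p) (hy : 0 ≤ y) (hy1 : y ≤ 1) :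
    (y ^ p - p * (y - 1) - 1) / (p * (p - 1)) =
      ∫ t in y..(1:ℝ), (t - y) * t ^ (p - 2) := by
  rw [psi_eq_integral hp hy, intervalIntegral.integral_symm y 1,
    ← intervalIntegral.integral_neg]
  exact intervalIntegral.integral_congr fun t _ => by ring

private lemma psi_nonneg {p y : ℝ} (hp : 1 < p) (hy : 0 ≤ y) :
    0 ≤ (y ^ p - p * (y - 1) - 1) / (p * (p - 1)) := by
  rcases le_or_gt 1 y with h | h
  · rw [psi_eq_integral hp hy]
    apply intervalIntegral.integral_nonneg h
    intro t ht
    have h1 : (0:ℝ) ≤ t ^ (p - 2) := Real.rpow_nonneg (by linarith [ht.1]) _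
    have := ht.2
    nlinarith
  · rw [psi_eq_integral' hp hy h.le]
    apply intervalIntegral.integral_nonneg h.le
    intro t ht
    have h1 : (0:ℝ) ≤ t ^ (p - 2) := Real.rpow_nonneg (by linarith [ht.1, hy]) _
    have := ht.1
    nlinarith

/-- For 1 < p₁ < p₂ ≤ 2 there is C > 0 with
ψ_{p₁}(y) ≤ C ψ_{p₂}(y) for all y ≥ 0. -/
theorem stmt_3 (p₁ p₂ : ℝ) (h1 : 1 < p₁) (h12 : p₁ < p₂) (h2 : p₂ ≤ 2) :
    ∃ C : ℝ, 0 < C ∧ ∀ y : ℝ, 0 ≤ y →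
      (y ^ p₁ - p₁ * (y - 1) - 1) / (p₁ * (p₁ - 1)) ≤
        C * ((y ^ p₂ - p₂ * (y - 1) - 1) / (p₂ * (p₂ - 1))) := by
  have h1' : 1 < p₂ := by linarith
  refine ⟨8, by norm_num, fun y hy => ?_⟩
  have hpsi2 := psi_nonneg h1' hy
  rcases le_or_gt 1 y with hy1 | hy1
  · -- y ≥ 1 : ψ₁ ≤ ψ₂
    have key : (y ^ p₁ - p₁ * (y - 1) - 1) / (p₁ * (p₁ - 1)) ≤
        (y ^ p₂ - p₂ * (y - 1) - 1) / (p₂ * (p₂ - 1)) := by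
      rw [psi_eq_integral h1 hy, psi_eq_integral h1' hy]
      apply intervalIntegral.integral_mono_on hy1
        (integrand_integrable h1) (integrand_integrable h1')
      intro t ht
      have ht1 : (1:ℝ) ≤ t := ht.1
      have : t ^ (p₁ - 2) ≤ t ^ (p₂ - 2) :=
        Real.rpow_le_rpow_of_exponent_le ht1 (by linarith)
      have hyt : 0 ≤ y - t := by linarith [ht.2]
      exact mul_le_mul_of_nonneg_left this hyt
    linarith
  rcases le_or_gt (1/2 : ℝ) y with hy2 | hy2
  · -- 1/2 ≤ y < 1 : ψ₁ ≤ 2 ψ₂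
    have key : (y ^ p₁ - p₁ * (y - 1) - 1) / (p₁ * (p₁ - 1)) ≤
        2 * ((y ^ p₂ - p₂ * (y - 1) - 1) / (p₂ * (p₂ - 1))) := by
      rw [psi_eq_integral' h1 hy hy1.le, psi_eq_integral' h1' hy hy1.le,
        ← intervalIntegral.integral_const_mul]
      have hi1 : IntervalIntegrable (fun t => (t - y) * t ^ (p₁ - 2)) volume y 1 :=
        ((intervalIntegral.intervalIntegrable_rpow' (a := y) (b := 1)
          (by linarith : (-1:ℝ) < p₁ - 2))).continuousOn_mul (by fun_prop)
      have hi2 : IntervalIntegrable (fun t => 2 * ((t - y) * t ^ (p₂ - 2))) volume y 1 :=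
        (((intervalIntegral.intervalIntegrable_rpow' (a := y) (b := 1)
          (by linarith : (-1:ℝ) < p₂ - 2))).continuousOn_mul (by fun_prop)).const_mul 2
      apply intervalIntegral.integral_mono_on hy1.le hi1 hi2
      intro t ht
      have ht0 : (1/2:ℝ) ≤ t := le_trans hy2 ht.1
      have ht1 : t ≤ 1 := ht.2
      have htpos : (0:ℝ) < t := by linarith
      -- t ^ (p₁ - 2) ≤ 2 * t ^ (p₂ - 2)
      have hk : t ^ (p₁ - 2) ≤ 2 * t ^ (p₂ - 2) := by
        have e1 : t ^ (p₁ - 2) = t ^ (p₂ - 2) * t ^ (p₁ - p₂) := by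
          rw [← Real.rpow_add htpos]; ring_nf
        have e2 : t ^ (p₁ - p₂) = (t⁻¹) ^ (p₂ - p₁) := by
          rw [Real.inv_rpow htpos.le, ← Real.rpow_neg htpos.le, neg_sub]
        have h3 : (t⁻¹ : ℝ) ≤ 2 := by
          rw [inv_le_comm₀ htpos (by norm_num)]; linarith
        have h4 : (t⁻¹ : ℝ) ^ (p₂ - p₁) ≤ 2 ^ (p₂ - p₁) :=
          Real.rpow_le_rpow (by positivity) h3 (by linarith)
        have h5 : (2:ℝ) ^ (p₂ - p₁) ≤ 2 ^ (1:ℝ) :=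
          Real.rpow_le_rpow_of_exponent_le (by norm_num) (by linarith)
        rw [Real.rpow_one] at h5
        have hpow2 : (0:ℝ) ≤ t ^ (p₂ - 2) := Real.rpow_nonneg htpos.le _
        calc t ^ (p₁ - 2) = t ^ (p₂ - 2) * t ^ (p₁ - p₂) := e1
          _ ≤ t ^ (p₂ - 2) * 2 := by
              rw [e2]; exact mul_le_mul_of_nonneg_left (h4.trans h5) hpow2
          _ = 2 * t ^ (p₂ - 2) := by ring
      have hty : 0 ≤ t - y := by linarith [ht.1]
      calc (t - y) * t ^ (p₁ - 2) ≤ (t - y) * (2 * t ^ (p₂ - 2)) :=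
            mul_le_mul_of_nonneg_left hk hty
        _ = 2 * ((t - y) * t ^ (p₂ - 2)) := by ring
    linarith
  · -- 0 ≤ y < 1/2 : ψ₁ ≤ 1 and ψ₂ ≥ 1/8
    have up : (y ^ p₁ - p₁ * (y - 1) - 1) / (p₁ * (p₁ - 1)) ≤ 1 := by
      rw [psi_eq_integral' h1 hy hy1.le]
      have hle : (∫ t in y..(1:ℝ), (t - y) * t ^ (p₁ - 2)) ≤
          ∫ t in y..(1:ℝ), t ^ (p₁ - 1) := by
        have hi1 : IntervalIntegrable (fun t => (t - y) * t ^ (p₁ - 2)) volume y 1 :=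
          ((intervalIntegral.intervalIntegrable_rpow' (a := y) (b := 1)
            (by linarith : (-1:ℝ) < p₁ - 2))).continuousOn_mul (by fun_prop)
        have hi2 : IntervalIntegrable (fun t => t ^ (p₁ - 1)) volume y 1 :=
          intervalIntegral.intervalIntegrable_rpow' (by linarith : (-1:ℝ) < p₁ - 1)
        apply intervalIntegral.integral_mono_on hy1.le hi1 hi2
        intro t ht
        have ht0 : 0 ≤ t := le_trans hy ht.1
        rcases eq_or_lt_of_le ht0 with h | h
        · rw [← h, Real.zero_rpow (by linarith), Real.zero_rpow (by linarith)]
          nlinarith [ht.1, hy]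
        · have e : t ^ (p₁ - 1) = t ^ (p₁ - 2) * t := by
            rw [← Real.rpow_add_one (ne_of_gt h) (p₁ - 2)]; ring_nf
          rw [e]
          have : (0:ℝ) ≤ t ^ (p₁ - 2) := Real.rpow_nonneg ht0 _
          nlinarith [ht.1, hy]
      have hval : (∫ t in y..(1:ℝ), t ^ (p₁ - 1)) = (1 - y ^ p₁) / p₁ := by
        rw [integral_rpow (Or.inl (by linarith : (-1:ℝ) < p₁ - 1))]
        rw [show p₁ - 1 + 1 = p₁ by ring, Real.one_rpow]
      have hyp : 0 ≤ y ^ p₁ := Real.rpow_nonneg hy _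
      have : (1 - y ^ p₁) / p₁ ≤ 1 := by
        rw [div_le_one (by linarith)]; linarith
      linarith
    have low : (1:ℝ)/8 ≤ (y ^ p₂ - p₂ * (y - 1) - 1) / (p₂ * (p₂ - 1)) := by
      rw [psi_eq_integral' h1' hy hy1.le]
      have hle : (∫ t in y..(1:ℝ), (t - y)) ≤
          ∫ t in y..(1:ℝ), (t - y) * t ^ (p₂ - 2) := by
        have hi2 : IntervalIntegrable (fun t => (t - y) * t ^ (p₂ - 2)) volume y 1 :=
          ((intervalIntegral.intervalIntegrable_rpow' (a := y) (b := 1)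
            (by linarith : (-1:ℝ) < p₂ - 2))).continuousOn_mul (by fun_prop)
        have hi1 : IntervalIntegrable (fun t => t - y) volume y 1 := by
          apply Continuous.intervalIntegrable; fun_prop
        apply intervalIntegral.integral_mono_on hy1.le hi1 hi2
        intro t ht
        have ht0 : 0 ≤ t := le_trans hy ht.1
        rcases eq_or_lt_of_le ht0 with h | h
        · have : y = 0 := le_antisymm (h ▸ ht.1) hy
          rw [← h, this]; simp
        · have h1t : 1 ≤ t ^ (p₂ - 2) :=
            Real.one_le_rpow_of_pos_of_le_one_of_nonpos h ht.2 (by linarith)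
          have hty : 0 ≤ t - y := by linarith [ht.1]
          nlinarith
      have hval : (∫ t in y..(1:ℝ), (t - y)) = (1 - y)^2 / 2 := by
        have : (∫ t in y..(1:ℝ), (t - y)) =
            (∫ t in y..(1:ℝ), t) - ∫ t in y..(1:ℝ), (y:ℝ) := by
          apply intervalIntegral.integral_sub
          · exact Continuous.intervalIntegrable (by fun_prop) _ _
          · exact intervalIntegrable_const
        rw [this, integral_id, intervalIntegral.integral_const, smul_eq_mul]
        ring
      have : (1:ℝ)/8 ≤ (1 - y)^2 / 2 := by nlinarith
      linarith
    linarith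
end

section
/- The function g(y) defined as g(y) = (p₂(p₂−1)/(p₁(p₁−1))) · (y^{p₁} − p₁(y−1) − 1)/(y^{p₂} − p₂(y−1) − 1) for y ≥ 0, y ≠ 1, and g(1) = 1, is continuous on [0,∞) and satisfies lim_{y→∞} g(y) = 0, whenever 1 < p₁ < p₂ ≤ 2. -/
open Filter Topology Set

private lemma aux_pos {p y : ℝ} (hp : 1 < p) (hy : 0 ≤ y) (hy1 : y ≠ 1) :
    0 < y ^ p - p * (y - 1) - 1 := by
  have h := one_add_mul_self_lt_rpow_one_add (s := y - 1) (by linarith)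
    (by intro h; apply hy1; linarith) hp
  rw [show (1 : ℝ) + (y - 1) = y by ring] at h
  linarith

private lemma aux_deriv {p : ℝ} {y : ℝ} (hy : y ≠ 0) :
    HasDerivAt (fun y : ℝ => y ^ p - p * (y - 1) - 1) (p * y ^ (p - 1) - p) y := by
  have h1 := Real.hasDerivAt_rpow_const (x := y) (p := p) (Or.inl hy)
  have h2 : HasDerivAt (fun y : ℝ => p * (y - 1)) p y := by
    simpa using ((hasDerivAt_id y).sub_const 1).const_mul p
  simpa using (h1.sub h2).sub_const 1

private lemma aux_deriv2 {p : ℝ} {y : ℝ} (hy : y ≠ 0) :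
    HasDerivAt (fun y : ℝ => p * y ^ (p - 1) - p) (p * ((p - 1) * y ^ (p - 1 - 1))) y := by
  exact ((Real.hasDerivAt_rpow_const (x := y) (p := p - 1) (Or.inl hy)).const_mul p).sub_const p

private lemma aux_tendsto_zero {p : ℝ} (_hp : 1 < p) :
    Tendsto (fun y : ℝ => y ^ p - p * (y - 1) - 1) (𝓝 1) (𝓝 0) := by
  have h : ContinuousAt (fun y : ℝ => y ^ p - p * (y - 1) - 1) 1 :=
    ((Real.continuousAt_rpow_const 1 p (Or.inl one_ne_zero)).sub
      (by fun_prop)).sub continuousAt_const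
  have := h.tendsto
  simpa using this

private lemma aux_ev_pos : ∀ᶠ y : ℝ in 𝓝[≠] (1 : ℝ), 0 < y :=
  eventually_nhdsWithin_of_eventually_nhds (eventually_gt_nhds zero_lt_one)

private lemma aux_ev_ne : ∀ᶠ y : ℝ in 𝓝[≠] (1 : ℝ), y ≠ 1 :=
  eventually_mem_nhdsWithin

/-- The key limit at 1, by L'Hôpital twice. -/
private lemma aux_lim (p₁ p₂ : ℝ) (h1 : 1 < p₁) (h12 : p₁ < p₂) :
    Tendsto (fun y : ℝ => (y ^ p₁ - p₁ * (y - 1) - 1) / (y ^ p₂ - p₂ * (y - 1) - 1))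
      (𝓝[≠] (1 : ℝ)) (𝓝 (p₁ * (p₁ - 1) / (p₂ * (p₂ - 1)))) := by
  have h2 : 1 < p₂ := h1.trans h12
  have hp₂0 : (0 : ℝ) < p₂ := by linarith
  -- second L'Hôpital data
  have hdiv2 : Tendsto (fun y : ℝ =>
      (p₁ * ((p₁ - 1) * y ^ (p₁ - 1 - 1))) / (p₂ * ((p₂ - 1) * y ^ (p₂ - 1 - 1))))
      (𝓝[≠] (1 : ℝ)) (𝓝 (p₁ * (p₁ - 1) / (p₂ * (p₂ - 1)))) := by
    have hc : ContinuousAt (fun y : ℝ =>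
        (p₁ * ((p₁ - 1) * y ^ (p₁ - 1 - 1))) / (p₂ * ((p₂ - 1) * y ^ (p₂ - 1 - 1)))) 1 := by
      apply ContinuousAt.div
      · exact (continuousAt_const.mul
          ((Real.continuousAt_rpow_const 1 _ (Or.inl one_ne_zero)).const_mul _))
      · exact (continuousAt_const.mul
          ((Real.continuousAt_rpow_const 1 _ (Or.inl one_ne_zero)).const_mul _))
      · have : (0:ℝ) < p₂ * ((p₂ - 1) * (1:ℝ) ^ (p₂ - 1 - 1)) := by
          rw [Real.one_rpow]
          nlinarith
        exact this.ne'
    have := hc.tendsto.mono_left (nhdsWithin_le_nhds (s := {(1:ℝ)}ᶜ))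
    simpa [Real.one_rpow] using this
  -- first L'Hôpital gives the limit of f'/g'
  have hmid : Tendsto (fun y : ℝ => (p₁ * y ^ (p₁ - 1) - p₁) / (p₂ * y ^ (p₂ - 1) - p₂))
      (𝓝[≠] (1 : ℝ)) (𝓝 (p₁ * (p₁ - 1) / (p₂ * (p₂ - 1)))) := by
    apply HasDerivAt.lhopital_zero_nhdsNE
    · exact aux_ev_pos.mono fun y hy => aux_deriv2 hy.ne'
    · exact aux_ev_pos.mono fun y hy => aux_deriv2 hy.ne'
    · filter_upwards [aux_ev_pos] with y hy
      have hr : (0:ℝ) < y ^ (p₂ - 1 - 1) := Real.rpow_pos_of_pos hy _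
      exact (mul_pos (by linarith) (mul_pos (by linarith) hr)).ne'
    · have hc : ContinuousAt (fun y : ℝ => p₁ * y ^ (p₁ - 1) - p₁) 1 :=
        ((Real.continuousAt_rpow_const 1 _ (Or.inl one_ne_zero)).const_mul _).sub
          continuousAt_const
      have := hc.tendsto.mono_left (nhdsWithin_le_nhds (s := {(1:ℝ)}ᶜ))
      simpa [Real.one_rpow] using this
    · have hc : ContinuousAt (fun y : ℝ => p₂ * y ^ (p₂ - 1) - p₂) 1 :=
        ((Real.continuousAt_rpow_const 1 _ (Or.inl one_ne_zero)).const_mul _).sub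
          continuousAt_const
      have := hc.tendsto.mono_left (nhdsWithin_le_nhds (s := {(1:ℝ)}ᶜ))
      simpa [Real.one_rpow] using this
    · exact hdiv2
  apply HasDerivAt.lhopital_zero_nhdsNE
  · exact aux_ev_pos.mono fun y hy => aux_deriv hy.ne'
  · exact aux_ev_pos.mono fun y hy => aux_deriv hy.ne'
  · filter_upwards [aux_ev_pos, aux_ev_ne] with y hy hy1
    have hne : y ^ (p₂ - 1) ≠ 1 := by
      rcases lt_or_gt_of_ne hy1 with h | h
      · exact ne_of_lt (Real.rpow_lt_one hy.le h (by linarith))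
      · exact ne_of_gt (Real.one_lt_rpow h (by linarith))
    intro hcon
    apply hne
    have hp : (0:ℝ) < p₂ := by linarith
    have heq : p₂ * y ^ (p₂ - 1) = p₂ * 1 := by rw [mul_one]; linarith
    exact mul_left_cancel₀ hp.ne' heq
  · exact (aux_tendsto_zero h1).mono_left nhdsWithin_le_nhds
  · exact (aux_tendsto_zero h2).mono_left nhdsWithin_le_nhds
  · exact hmid

/-- For 1 < p₁ < p₂ ≤ 2 the function
g(y) = (p₂(p₂−1)/(p₁(p₁−1))) (y^{p₁} − p₁(y−1) − 1)/(y^{p₂} − p₂(y−1) − 1) for y ≥ 0, y ≠ 1,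
g(1) = 1, is continuous on [0,∞) and tends to 0 as y → ∞. -/
theorem stmt_4 (p₁ p₂ : ℝ) (h1 : 1 < p₁) (h12 : p₁ < p₂) (h2 : p₂ ≤ 2)
    (g : ℝ → ℝ)
    (hg : ∀ y : ℝ, 0 ≤ y → y ≠ 1 →
      g y = (p₂ * (p₂ - 1) / (p₁ * (p₁ - 1))) *
        ((y ^ p₁ - p₁ * (y - 1) - 1) / (y ^ p₂ - p₂ * (y - 1) - 1)))
    (hg1 : g 1 = 1) :
    ContinuousOn g (Set.Ici (0 : ℝ)) ∧
      Filter.Tendsto g Filter.atTop (nhds 0) := by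
  have h2' : 1 < p₂ := h1.trans h12
  set C : ℝ := p₂ * (p₂ - 1) / (p₁ * (p₁ - 1)) with hC
  set φ : ℝ → ℝ := fun y =>
    C * ((y ^ p₁ - p₁ * (y - 1) - 1) / (y ^ p₂ - p₂ * (y - 1) - 1)) with hφ
  have hp₁0 : (0:ℝ) < p₁ - 1 := by linarith
  have hp₂0 : (0:ℝ) < p₂ - 1 := by linarith
  constructor
  · -- continuity
    intro x hx
    rcases eq_or_ne x 1 with rfl | hx1
    · -- continuity at 1
      apply ContinuousWithinAt.mono _ (subset_univ _)
      rw [continuousWithinAt_univ]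
      unfold ContinuousAt
      rw [← nhdsNE_sup_pure (1:ℝ), tendsto_sup]
      constructor
      · have hlim := (aux_lim p₁ p₂ h1 h12).const_mul C
        have hC1 : C * (p₁ * (p₁ - 1) / (p₂ * (p₂ - 1))) = 1 := by
          rw [hC]
          field_simp
        rw [hC1] at hlim
        rw [hg1]
        apply hlim.congr'
        filter_upwards [aux_ev_pos, aux_ev_ne] with y hy hy1
        exact (hg y hy.le hy1).symm
      · simpa [hg1] using tendsto_pure_nhds g 1
    · -- continuity at x ≠ 1
      have hφc : ContinuousAt φ x := by
        apply ContinuousAt.mul continuousAt_const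
        apply ContinuousAt.div
        · exact ((Real.continuousAt_rpow_const x p₁ (Or.inr (by linarith))).sub
            (by fun_prop)).sub continuousAt_const
        · exact ((Real.continuousAt_rpow_const x p₂ (Or.inr (by linarith))).sub
            (by fun_prop)).sub continuousAt_const
        · exact (aux_pos h2' hx hx1).ne'
      apply ContinuousWithinAt.congr_of_eventuallyEq hφc.continuousWithinAt
      · filter_upwards [eventually_nhdsWithin_of_eventually_nhds
          (eventually_ne_nhds hx1), self_mem_nhdsWithin] with y hy1 hy0
        exact hg y hy0 hy1
      · exact hg x hx hx1
  · -- limit at infinity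
    have hev : ∀ᶠ y : ℝ in atTop, (1:ℝ) < y := eventually_gt_atTop 1
    have hnum : Tendsto (fun y : ℝ => (y ^ p₁ - p₁ * (y - 1) - 1) / y ^ p₂) atTop (𝓝 0) := by
      have h := ((tendsto_rpow_neg_atTop (by linarith : (0:ℝ) < p₂ - p₁)).sub
        ((tendsto_rpow_neg_atTop hp₂0).const_mul p₁)).add
        ((tendsto_rpow_neg_atTop (by linarith : (0:ℝ) < p₂)).const_mul (p₁ - 1))
      rw [show (0:ℝ) - p₁ * 0 + (p₁ - 1) * 0 = 0 by ring] at h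
      apply h.congr'
      filter_upwards [hev] with y hy
      have hy0 : (0:ℝ) < y := by linarith
      have hyp : (0:ℝ) < y ^ p₂ := Real.rpow_pos_of_pos hy0 _
      rw [eq_div_iff hyp.ne']
      have e1 : y ^ (-(p₂ - p₁)) * y ^ p₂ = y ^ p₁ := by
        rw [← Real.rpow_add hy0, show -(p₂ - p₁) + p₂ = p₁ by ring]
      have e2 : y ^ (-(p₂ - 1)) * y ^ p₂ = y := by
        rw [← Real.rpow_add hy0, show -(p₂ - 1) + p₂ = 1 by ring, Real.rpow_one]
      have e3 : y ^ (-p₂) * y ^ p₂ = 1 := by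
        rw [← Real.rpow_add hy0, neg_add_cancel, Real.rpow_zero]
      rw [add_mul, sub_mul, mul_assoc p₁, mul_assoc (p₁ - 1), e1, e2, e3]
      ring
    have hden : Tendsto (fun y : ℝ => (y ^ p₂ - p₂ * (y - 1) - 1) / y ^ p₂) atTop (𝓝 1) := by
      have h := (tendsto_const_nhds (x := (1:ℝ)) (f := atTop)).sub
        (((tendsto_rpow_neg_atTop hp₂0).const_mul p₂).sub
        ((tendsto_rpow_neg_atTop (by linarith : (0:ℝ) < p₂)).const_mul (p₂ - 1)))
      rw [show (1:ℝ) - (p₂ * 0 - (p₂ - 1) * 0) = 1 by ring] at h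
      apply h.congr'
      filter_upwards [hev] with y hy
      have hy0 : (0:ℝ) < y := by linarith
      have hyp : (0:ℝ) < y ^ p₂ := Real.rpow_pos_of_pos hy0 _
      rw [eq_div_iff hyp.ne']
      have e2 : y ^ (-(p₂ - 1)) * y ^ p₂ = y := by
        rw [← Real.rpow_add hy0, show -(p₂ - 1) + p₂ = 1 by ring, Real.rpow_one]
      have e3 : y ^ (-p₂) * y ^ p₂ = 1 := by
        rw [← Real.rpow_add hy0, neg_add_cancel, Real.rpow_zero]
      rw [sub_mul, sub_mul, one_mul, mul_assoc p₂, mul_assoc (p₂ - 1), e2, e3]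
      ring
    have hratio : Tendsto (fun y : ℝ =>
        (y ^ p₁ - p₁ * (y - 1) - 1) / (y ^ p₂ - p₂ * (y - 1) - 1)) atTop (𝓝 0) := by
      have h := hnum.div hden one_ne_zero
      rw [zero_div] at h
      apply h.congr'
      filter_upwards [hev] with y hy
      have hy0 : (0:ℝ) < y := by linarith
      have hyp : (y : ℝ) ^ p₂ ≠ 0 := (Real.rpow_pos_of_pos hy0 _).ne'
      have hden0 : y ^ p₂ - p₂ * (y - 1) - 1 ≠ 0 := (aux_pos h2' hy0.le (by linarith)).ne'
      simp only [Pi.div_apply]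
      field_simp
    have h := hratio.const_mul C
    rw [mul_zero] at h
    apply h.congr'
    filter_upwards [hev] with y hy
    exact (hg y (by linarith) (by linarith [hy])).symm
end

section
/- Let ψ be a generating function for an admissible relative entropy, i.e. ψ ∈ C(ℝ⁺₀) ∩ C⁴(ℝ⁺), ψ(1) = ψ'(1) = 0, ψ'' > 0 on ℝ⁺, and (ψ''')² ≤ (1/2) ψ'' ψ''''. Then ψ(y) ≤ 2 ψ''(1) · (y−1)²/2 = ψ''(1)(y−1)² for all y ≥ 0. -/
open Set Filter Topology InformationTheory

/-!
Admissibility says exactly that `1 / ψ''` is concave, since `(1/f)'' = (2 f'² - f f'') / f³`.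
A nonnegative concave function `g` on `(0, ∞)` is nondecreasing and `g t / t` is nonincreasing
(let the chord through two points run to `∞`, resp. to `0`), so `ψ'' ≤ ψ''(1)` on `[1, ∞)` and
`t ψ''(t) ≤ ψ''(1)` on `(0, 1]`. Both `ψ''(1) (y - 1)²` on `[1, ∞)` and
`ψ''(1) (y log y + 1 - y)` on `(0, 1]` agree with `ψ` to first order at `1` and have larger
second derivative, hence dominate `ψ`; and `y log y + 1 - y ≤ (y - 1)²`. The endpoint `y = 0`
follows by continuity.
-/

theorem ContDiffOn.hasDerivAt_iterate_deriv {f : ℝ → ℝ} {s : Set ℝ} {n : ℕ}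
    (hf : ContDiffOn ℝ n f s) (hs : IsOpen s) {k : ℕ} (hk : k < n) {x : ℝ} (hx : x ∈ s) :
    HasDerivAt (deriv^[k] f) (deriv^[k + 1] f x) x := by
  induction k generalizing f n with
  | zero =>
    exact ((hf.differentiableOn (by exact_mod_cast hk.ne')).differentiableAt
      (hs.mem_nhds hx)).hasDerivAt
  | succ k ih =>
    obtain ⟨m, rfl⟩ : ∃ m, n = m + 1 := ⟨n - 1, by omega⟩
    exact ih (hf.deriv_of_isOpen hs (by push_cast; rfl)) (by omega)

theorem concaveOn_inv_of_sq_deriv_le {D : Set ℝ} (hD : Convex ℝ D) {f f' f'' : ℝ → ℝ}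
    (hf : ∀ x ∈ D, HasDerivAt f (f' x) x) (hf' : ∀ x ∈ interior D, HasDerivAt f' (f'' x) x)
    (hpos : ∀ x ∈ D, 0 < f x) (h : ∀ x ∈ interior D, 2 * f' x ^ 2 ≤ f x * f'' x) :
    ConcaveOn ℝ D f⁻¹ := by
  have hf₀ : ∀ x ∈ D, f x ≠ 0 := fun x hx => (hpos x hx).ne'
  refine concaveOn_of_hasDerivWithinAt2_nonpos hD (f' := fun x => -f' x / f x ^ 2)
    (f'' := fun x => (2 * f' x ^ 2 - f x * f'' x) / f x ^ 3)
    (fun x hx => ((hf x hx).inv (hf₀ x hx)).continuousAt.continuousWithinAt)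
    (fun x hx =>
      ((hf x (interior_subset hx)).inv (hf₀ x (interior_subset hx))).hasDerivWithinAt)
    (fun x hx => ?_) (fun x hx => ?_)
  · have hx₀ := hf₀ x (interior_subset hx)
    refine (((hf' x hx).fun_neg.fun_div ((hf x (interior_subset hx)).fun_pow 2)
      (pow_ne_zero 2 hx₀)).congr_deriv ?_).hasDerivWithinAt
    field_simp
    ring
  · have hx₀ := hpos x (interior_subset hx)
    exact div_nonpos_of_nonpos_of_nonneg (by linarith [h x hx]) (by positivity)

theorem ConcaveOn.monotoneOn_of_nonneg {g : ℝ → ℝ} {a : ℝ} (hg : ConcaveOn ℝ (Ioi a) g)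
    (h₀ : ∀ t ∈ Ioi a, 0 ≤ g t) : MonotoneOn g (Ioi a) := by
  intro x hx y hy hxy
  rcases hxy.eq_or_lt with rfl | hxy
  · rfl
  have hslope : ∀ T, y < T → -g y / (T - y) ≤ (g y - g x) / (y - x) := fun T hT =>
    calc -g y / (T - y) ≤ (g T - g y) / (T - y) := by
          gcongr
          all_goals linarith [h₀ T (hy.out.trans hT)]
      _ ≤ (g y - g x) / (y - x) := hg.slope_anti_adjacent hx (hy.out.trans hT) hxy hT
  have hlim : Tendsto (fun T => -g y / (T - y)) atTop (𝓝 0) :=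
    tendsto_const_nhds.div_atTop (tendsto_atTop_add_const_right _ _ tendsto_id)
  have key := le_of_tendsto hlim ((eventually_gt_atTop y).mono hslope)
  rwa [le_div_iff₀ (sub_pos.mpr hxy), zero_mul, sub_nonneg] at key

theorem ConcaveOn.antitoneOn_div_of_nonneg {g : ℝ → ℝ} (hg : ConcaveOn ℝ (Ioi 0) g)
    (h₀ : ∀ t ∈ Ioi 0, 0 ≤ g t) : AntitoneOn (fun t => g t / t) (Ioi 0) := by
  intro x (hx : 0 < x) y (hy : 0 < y) hxy
  rcases hxy.eq_or_lt with rfl | hxy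
  · rfl
  have hslope : ∀ z ∈ Ioo 0 x, (g y - g x) / (y - x) ≤ g x / (x - z) := fun z hz =>
    calc (g y - g x) / (y - x) ≤ (g x - g z) / (x - z) :=
          hg.slope_anti_adjacent hz.1 hy hz.2 hxy
      _ ≤ g x / (x - z) := by
          gcongr
          · linarith [hz.2]
          · linarith [h₀ z hz.1]
  have hlim : Tendsto (fun z => g x / (x - z)) (𝓝[>] 0) (𝓝 (g x / x)) := by
    have : ContinuousAt (fun z => g x / (x - z)) 0 :=
      continuousAt_const.div (continuousAt_const.sub continuousAt_id) (by simpa using hx.ne')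
    simpa using this.tendsto.mono_left nhdsWithin_le_nhds
  have key := ge_of_tendsto hlim (eventually_of_mem (Ioo_mem_nhdsGT hx) hslope)
  rw [div_le_iff₀ (sub_pos.mpr hxy), div_mul_eq_mul_div, le_div_iff₀ hx] at key
  show g y / y ≤ g x / x
  rw [div_le_div_iff₀ hy hx]
  linarith

theorem ConcaveOn.antitoneOn_of_inv {f : ℝ → ℝ} {a : ℝ} (hconc : ConcaveOn ℝ (Ioi a) f⁻¹)
    (hpos : ∀ x ∈ Ioi a, 0 < f x) : AntitoneOn f (Ioi a) := fun x hx y hy hxy =>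
  (inv_le_inv₀ (hpos x hx) (hpos y hy)).mp
    (hconc.monotoneOn_of_nonneg (fun t ht => (inv_pos.mpr (hpos t ht)).le) hx hy hxy)

theorem ConcaveOn.monotoneOn_mul_of_inv {f : ℝ → ℝ} (hconc : ConcaveOn ℝ (Ioi 0) f⁻¹)
    (hpos : ∀ x ∈ Ioi 0, 0 < f x) : MonotoneOn (fun x => x * f x) (Ioi 0) := by
  intro x hx y hy hxy
  have h : (f y)⁻¹ / y ≤ (f x)⁻¹ / x :=
    hconc.antitoneOn_div_of_nonneg (fun t ht => (inv_pos.mpr (hpos t ht)).le) hx hy hxy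
  simp only [div_eq_mul_inv, ← mul_inv, mul_comm (f _)] at h
  exact (inv_le_inv₀ (mul_pos hy (hpos y hy)) (mul_pos hx (hpos x hx))).mp h

theorem ConvexOn.isMinOn_of_hasDerivAt_eq_zero {S : Set ℝ} {u : ℝ → ℝ} {a : ℝ}
    (hu : ConvexOn ℝ S u) (ha : a ∈ S) (hda : HasDerivAt u 0 a) : IsMinOn u S a := by
  refine fun y hy => show u a ≤ u y from ?_
  rcases lt_trichotomy y a with hya | rfl | hay
  · have := hu.slope_le_of_hasDerivAt hy ha hya hda
    rw [slope_def_field, div_le_iff₀ (sub_pos.mpr hya)] at this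
    linarith
  · exact le_rfl
  · have := hu.le_slope_of_hasDerivAt ha hy hay hda
    rw [slope_def_field, le_div_iff₀ (sub_pos.mpr hay)] at this
    linarith

theorem le_of_deriv2_le {D : Set ℝ} (hD : Convex ℝ D) {f f' f'' g g' g'' : ℝ → ℝ}
    (hf : ∀ x ∈ D, HasDerivAt f (f' x) x) (hf' : ∀ x ∈ interior D, HasDerivAt f' (f'' x) x)
    (hg : ∀ x ∈ D, HasDerivAt g (g' x) x) (hg' : ∀ x ∈ interior D, HasDerivAt g' (g'' x) x)
    (h : ∀ x ∈ interior D, f'' x ≤ g'' x) {a : ℝ} (ha : a ∈ D) (h₀ : f a = g a)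
    (h₁ : f' a = g' a) {y : ℝ} (hy : y ∈ D) : f y ≤ g y := by
  have hconv : ConvexOn ℝ D (g - f) :=
    convexOn_of_hasDerivWithinAt2_nonneg hD (f' := g' - f') (f'' := g'' - f'')
      (fun x hx => ((hg x hx).sub (hf x hx)).continuousAt.continuousWithinAt)
      (fun x hx =>
        ((hg x (interior_subset hx)).sub (hf x (interior_subset hx))).hasDerivWithinAt)
      (fun x hx => ((hg' x hx).sub (hf' x hx)).hasDerivWithinAt)
      (fun x hx => sub_nonneg.mpr (h x hx))
  have hda : HasDerivAt (g - f) 0 a := by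
    simpa [h₁] using (hg a ha).sub (hf a ha)
  simpa [h₀] using hconv.isMinOn_of_hasDerivAt_eq_zero ha hda hy

theorem le_mul_sq_of_deriv2_le {ψ ψ' ψ'' : ℝ → ℝ} {a c : ℝ}
    (hψ : ∀ x ∈ Ici a, HasDerivAt ψ (ψ' x) x) (hψ' : ∀ x ∈ Ioi a, HasDerivAt ψ' (ψ'' x) x)
    (h₀ : ψ a = 0) (h₁ : ψ' a = 0) (h : ∀ x ∈ Ioi a, ψ'' x ≤ 2 * c) {y : ℝ} (hy : a ≤ y) :
    ψ y ≤ c * (y - a) ^ 2 := by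
  refine le_of_deriv2_le (convex_Ici a) hψ (by rwa [interior_Ici])
    (g := fun x => c * (x - a) ^ 2) (g' := fun x => 2 * c * (x - a))
    (g'' := fun _ => 2 * c) (fun x _ => ?_) (fun x _ => ?_) (by rwa [interior_Ici])
    self_mem_Ici (by simp [h₀]) (by simp [h₁]) hy
  · exact (((hasDerivAt_id' x).sub_const a).fun_pow 2).const_mul c |>.congr_deriv (by ring)
  · simpa using ((hasDerivAt_id x).sub_const a).const_mul (2 * c)

theorem le_mul_klFun_of_mul_deriv2_le {ψ ψ' ψ'' : ℝ → ℝ} {c : ℝ}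
    (hψ : ∀ x ∈ Ioc 0 1, HasDerivAt ψ (ψ' x) x)
    (hψ' : ∀ x ∈ Ioo 0 1, HasDerivAt ψ' (ψ'' x) x) (h₀ : ψ 1 = 0) (h₁ : ψ' 1 = 0)
    (h : ∀ x ∈ Ioo 0 1, x * ψ'' x ≤ c) {y : ℝ} (hy : y ∈ Ioc 0 1) : ψ y ≤ c * klFun y := by
  refine le_of_deriv2_le (convex_Ioc 0 1) hψ (by rwa [interior_Ioc])
    (g := fun x => c * klFun x) (g' := fun x => c * Real.log x) (g'' := fun x => c * x⁻¹)
    (fun x hx => (hasDerivAt_klFun hx.1.ne').const_mul c)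
    (fun x hx => ?_) (fun x hx => ?_) (right_mem_Ioc.mpr one_pos)
    (by simp [h₀, klFun_one]) (by simp [h₁]) hy
  · rw [interior_Ioc] at hx
    exact (Real.hasDerivAt_log hx.1.ne').const_mul c
  · rw [interior_Ioc] at hx
    rw [← div_eq_mul_inv, le_div_iff₀ hx.1, mul_comm]
    exact h x hx

theorem klFun_le_sq {x : ℝ} (hx : 0 ≤ x) : klFun x ≤ (x - 1) ^ 2 := by
  rcases hx.eq_or_lt with rfl | hx
  · simp [klFun_zero]
  have := mul_le_mul_of_nonneg_left (Real.log_le_sub_one_of_pos hx) hx.le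
  rw [klFun_apply]
  nlinarith

/-- If ψ is a generating function for an admissible relative entropy
(ψ ∈ C(ℝ⁺₀) ∩ C⁴(ℝ⁺), ψ(1) = ψ'(1) = 0, ψ'' > 0 on ℝ⁺, (ψ''')² ≤ ½ ψ'' ψ''''),
then ψ(y) ≤ ψ''(1) (y−1)² for all y ≥ 0. -/
theorem stmt_5 (ψ : ℝ → ℝ)
    (hcont : ContinuousOn ψ (Set.Ici (0 : ℝ)))
    (hC4 : ContDiffOn ℝ 4 ψ (Set.Ioi (0 : ℝ)))
    (h1 : ψ 1 = 0) (h1' : deriv ψ 1 = 0)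
    (hpos : ∀ y : ℝ, 0 < y → 0 < deriv^[2] ψ y)
    (hadm : ∀ y : ℝ, 0 < y →
      (deriv^[3] ψ y) ^ 2 ≤ (1 / 2) * (deriv^[2] ψ y) * (deriv^[4] ψ y)) :
    ∀ y : ℝ, 0 ≤ y → ψ y ≤ deriv^[2] ψ 1 * (y - 1) ^ 2 := by
  have hderiv : ∀ k < 4, ∀ x : ℝ, 0 < x → HasDerivAt (deriv^[k] ψ) (deriv^[k + 1] ψ x) x :=
    fun k hk x hx => hC4.hasDerivAt_iterate_deriv (n := 4) isOpen_Ioi hk hx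
  have hconc : ConcaveOn ℝ (Ioi 0) (deriv^[2] ψ)⁻¹ :=
    concaveOn_inv_of_sq_deriv_le (convex_Ioi 0) (f' := deriv^[3] ψ) (f'' := deriv^[4] ψ)
      (hderiv 2 (by norm_num)) (by rw [interior_Ioi]; exact hderiv 3 (by norm_num)) hpos
      (by rw [interior_Ioi]; exact fun x hx => by linarith [hadm x hx])
  set c := deriv^[2] ψ 1
  have hc : 0 < c := hpos 1 one_pos
  have hlarge : ∀ x ∈ Ioi 1, deriv^[2] ψ x ≤ 2 * c := fun x (hx : 1 < x) => by
    linarith [hconc.antitoneOn_of_inv hpos (mem_Ioi.mpr one_pos) (one_pos.trans hx) hx.le]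
  have hsmall : ∀ x ∈ Ioo 0 1, x * deriv^[2] ψ x ≤ c := fun x hx =>
    (hconc.monotoneOn_mul_of_inv hpos hx.1 (mem_Ioi.mpr one_pos) hx.2.le).trans_eq (one_mul c)
  have hbound : ∀ y ∈ Ioi 0, ψ y ≤ c * (y - 1) ^ 2 := by
    intro y (hy : 0 < y)
    rcases le_total y 1 with hy1 | hy1
    · calc ψ y ≤ c * klFun y :=
            le_mul_klFun_of_mul_deriv2_le (fun x hx => hderiv 0 (by norm_num) x hx.1)
              (fun x hx => hderiv 1 (by norm_num) x hx.1) h1 h1' hsmall ⟨hy, hy1⟩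
        _ ≤ c * (y - 1) ^ 2 := by gcongr; exact klFun_le_sq hy.le
    · exact le_mul_sq_of_deriv2_le (fun x hx => hderiv 0 (by norm_num) x (one_pos.trans_le hx))
        (fun x hx => hderiv 1 (by norm_num) x (one_pos.trans hx)) h1 h1' hlarge hy1
  intro y hy
  exact le_on_closure hbound (by rwa [closure_Ioi]) (by fun_prop) (by rwa [closure_Ioi])
end
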